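/- arXiv:2508.13093 — 3 statements merged into one kernel-verified Lean document; each statement's English description precedes it below -/
import Mathlib

section
/- Define Ω(F₁) = { x²/z² : (x,y,z) ∈ ℤ³, gcd(x,y,z) = 1, x² − y² − z² = 0, z ≠ 0 }, Ω(F₂) = { −x²/z² : (x,y,z) ∈ ℤ³, gcd(x,y,z) = 1, x² − y² + z² = 0, z ≠ 0 }, and Ω(F₃) = { x²/z² : (x,y,z) ∈ ℤ³, gcd(x,y,z) = 1, x² + y² − z² = 0, z ≠ 0 }, all as subsets of ℚ. Then Ω(2,2,2) = Ω(F₁) ∪ Ω(F₂) ∪ Ω(F₃), and the pairwise intersections Ω(Fᵢ) ∩ Ω(Fⱼ) for i ≠ j are contained in {0, 1}. -/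
/-- An integer `m` is a perfect square if `|m| = e²` for some `e ≥ 0`. -/
def IsPerfectSquare (m : ℤ) : Prop := ∃ e : ℕ, m.natAbs = e ^ 2

/-- The set `Ω(2,2,2)` of rationals `q` such that `|num q|`, `|num q − den q|`
and `den q` are all perfect squares. -/
def Omega222 : Set ℚ :=
  {q | IsPerfectSquare q.num ∧ IsPerfectSquare (q.num - (q.den : ℤ)) ∧
    IsPerfectSquare (q.den : ℤ)}

/-- `Ω(F₁)` for `F₁ : x² − y² − z² = 0`. -/
def OmegaF1 : Set ℚ :=
  {q | ∃ x y z : ℤ, Int.gcd x (Int.gcd y z) = 1 ∧ x ^ 2 - y ^ 2 - z ^ 2 = 0 ∧ z ≠ 0 ∧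
    q = (x : ℚ) ^ 2 / (z : ℚ) ^ 2}

/-- `Ω(F₂)` for `F₂ : x² − y² + z² = 0`. -/
def OmegaF2 : Set ℚ :=
  {q | ∃ x y z : ℤ, Int.gcd x (Int.gcd y z) = 1 ∧ x ^ 2 - y ^ 2 + z ^ 2 = 0 ∧ z ≠ 0 ∧
    q = -((x : ℚ) ^ 2 / (z : ℚ) ^ 2)}

/-- `Ω(F₃)` for `F₃ : x² + y² − z² = 0`. -/
def OmegaF3 : Set ℚ :=
  {q | ∃ x y z : ℤ, Int.gcd x (Int.gcd y z) = 1 ∧ x ^ 2 + y ^ 2 - z ^ 2 = 0 ∧ z ≠ 0 ∧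
    q = (x : ℚ) ^ 2 / (z : ℚ) ^ 2}

lemma num_den_sq {x z : ℤ} (h : Int.gcd x z = 1) (hz : z ≠ 0) :
    ((x:ℚ)^2/(z:ℚ)^2).num = x^2 ∧ (((x:ℚ)^2/(z:ℚ)^2).den : ℤ) = z^2 := by
  have hz2 : (0:ℤ) < z^2 := by positivity
  have hcop : Nat.Coprime (x^2).natAbs (z^2).natAbs := by
    simp only [Int.natAbs_pow]
    exact Nat.Coprime.pow (m := 2) (n := 2) h
  have e : ((x:ℚ)^2/(z:ℚ)^2) = ((x^2 : ℤ):ℚ)/((z^2:ℤ):ℚ) := by push_cast; ring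
  rw [e]
  exact ⟨Rat.num_div_eq_of_coprime hz2 hcop, Rat.den_div_eq_of_coprime hz2 hcop⟩

lemma gcd_xz {x y z : ℤ} (h : Int.gcd x (Int.gcd y z) = 1) (hy : (Int.gcd x z : ℤ)^2 ∣ y^2) :
    Int.gcd x z = 1 := by
  set g : ℤ := (Int.gcd x z : ℤ) with hg
  have hgy : g ∣ y := (Int.pow_dvd_pow_iff (n := 2) (by norm_num)).mp hy
  have hdvd : g ∣ (Int.gcd x (Int.gcd y z) : ℤ) :=
    Int.dvd_coe_gcd (Int.gcd_dvd_left (a := x) (b := z))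
      (Int.natCast_dvd_natCast.mpr (Nat.dvd_gcd (Int.natAbs_dvd_natAbs.mpr hgy)
        (Int.natAbs_dvd_natAbs.mpr (Int.gcd_dvd_right (a := x) (b := z)))))
  rw [h] at hdvd
  have h1 : Int.gcd x z ∣ 1 := by
    rw [hg] at hdvd; exact_mod_cast hdvd
  exact Nat.dvd_one.mp h1

lemma gcd_abc {a b c : ℕ} (h : Nat.Coprime a c) :
    Int.gcd (a:ℤ) (Int.gcd (b:ℤ) (c:ℤ)) = 1 := by
  have h2 : Nat.Coprime a (Nat.gcd b c) :=
    Nat.Coprime.coprime_dvd_right (Nat.gcd_dvd_right b c) h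
  simpa [Int.gcd_natCast_natCast] using h2

theorem stmt4 :
    Omega222 = OmegaF1 ∪ OmegaF2 ∪ OmegaF3 ∧
    OmegaF1 ∩ OmegaF2 ⊆ {0, 1} ∧
    OmegaF1 ∩ OmegaF3 ⊆ {0, 1} ∧
    OmegaF2 ∩ OmegaF3 ⊆ {0, 1} := by
  refine ⟨?_, ?_, ?_, ?_⟩
  · ext q
    constructor
    · rintro ⟨⟨a, ha⟩, ⟨b, hb⟩, ⟨c, hc⟩⟩
      have hdenN : q.den = c ^ 2 := by simpa using hc
      have hden : (q.den : ℤ) = (c:ℤ)^2 := by exact_mod_cast hdenN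
      have hc0 : (c:ℤ) ≠ 0 := by
        have hp : 0 < q.den := q.pos
        rw [hdenN] at hp
        have : c ≠ 0 := by rintro rfl; simp at hp
        exact_mod_cast this
      have hq : q = (q.num : ℚ) / (q.den : ℚ) := (Rat.num_div_den q).symm
      have hred : Nat.Coprime q.num.natAbs q.den := q.reduced
      have hac : Nat.Coprime a c := by
        rw [ha, hdenN] at hred
        exact Nat.Coprime.coprime_dvd_left (dvd_pow_self a two_ne_zero)
          (Nat.Coprime.coprime_dvd_right (dvd_pow_self c two_ne_zero) hred)
      rcases le_or_gt 0 q.num with hn0 | hn0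
      · have hnum : q.num = (a:ℤ)^2 := by
          rw [← Int.natAbs_of_nonneg hn0]; exact_mod_cast ha
        rcases le_or_gt (q.den : ℤ) q.num with hnd | hnd
        · have hb' : q.num - (q.den:ℤ) = (b:ℤ)^2 := by
            rw [← Int.natAbs_of_nonneg (by linarith : (0:ℤ) ≤ q.num - (q.den:ℤ))]
            exact_mod_cast hb
          refine Or.inl (Or.inl ⟨a, b, c, gcd_abc hac, by linarith, hc0, ?_⟩)
          rw [hq, hnum, hdenN]; push_cast; ring
        · have hb' : (q.den:ℤ) - q.num = (b:ℤ)^2 := by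
            have h2 : |q.num - (q.den:ℤ)| = (b:ℤ)^2 := by
              rw [Int.abs_eq_natAbs]; exact_mod_cast hb
            rw [abs_of_neg (by linarith)] at h2; linarith
          refine Or.inr ⟨a, b, c, gcd_abc hac, by linarith, hc0, ?_⟩
          rw [hq, hnum, hdenN]; push_cast; ring
      · have hnum : q.num = -(a:ℤ)^2 := by
          have h2 : |q.num| = (a:ℤ)^2 := by
            rw [Int.abs_eq_natAbs]; exact_mod_cast ha
          rw [abs_of_neg hn0] at h2; linarith
        have hb' : (q.den:ℤ) - q.num = (b:ℤ)^2 := by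
          have h2 : |q.num - (q.den:ℤ)| = (b:ℤ)^2 := by
            rw [Int.abs_eq_natAbs]; exact_mod_cast hb
          have hdpos : (0:ℤ) < q.den := by exact_mod_cast q.pos
          rw [abs_of_neg (by linarith)] at h2; linarith
        refine Or.inl (Or.inr ⟨a, b, c, gcd_abc hac, by linarith, hc0, ?_⟩)
        rw [hq, hnum, hdenN]; push_cast; ring
    · have sq : ∀ w : ℤ, IsPerfectSquare (w^2) :=
        fun w => ⟨w.natAbs, by rw [Int.natAbs_pow]⟩
      have sqneg : ∀ w : ℤ, IsPerfectSquare (-(w^2)) :=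
        fun w => ⟨w.natAbs, by rw [Int.natAbs_neg, Int.natAbs_pow]⟩
      rintro ((⟨x,y,z,hg,he,hz,hq⟩|⟨x,y,z,hg,he,hz,hq⟩)|⟨x,y,z,hg,he,hz,hq⟩)
      · have hxz : Int.gcd x z = 1 := by
          refine gcd_xz hg ?_
          have : y^2 = x^2 - z^2 := by linarith
          rw [this]
          exact dvd_sub
            (pow_dvd_pow_of_dvd (Int.gcd_dvd_left (a := x) (b := z)) 2)
            (pow_dvd_pow_of_dvd (Int.gcd_dvd_right (a := x) (b := z)) 2)
        obtain ⟨hnum, hden⟩ := num_den_sq hxz hz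
        subst hq
        refine ⟨hnum ▸ sq x, ?_, hden ▸ sq z⟩
        rw [hnum, hden, show x^2 - z^2 = y^2 by linarith]
        exact sq y
      · have hxz : Int.gcd x z = 1 := by
          refine gcd_xz hg ?_
          have : y^2 = x^2 + z^2 := by linarith
          rw [this]
          exact dvd_add
            (pow_dvd_pow_of_dvd (Int.gcd_dvd_left (a := x) (b := z)) 2)
            (pow_dvd_pow_of_dvd (Int.gcd_dvd_right (a := x) (b := z)) 2)
        obtain ⟨hnum, hden⟩ := num_den_sq hxz hz
        subst hq
        have hn' : (-((x:ℚ)^2/(z:ℚ)^2)).num = -(x^2) := by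
          rw [Rat.num_neg_eq_neg_num, hnum]
        have hd' : ((-((x:ℚ)^2/(z:ℚ)^2)).den : ℤ) = z^2 := by
          rw [Rat.den_neg_eq_den]; exact hden
        refine ⟨hn' ▸ sqneg x, ?_, hd' ▸ sq z⟩
        rw [hn', hd', show -(x^2) - z^2 = -(y^2) by linarith]
        exact sqneg y
      · have hxz : Int.gcd x z = 1 := by
          refine gcd_xz hg ?_
          have : y^2 = z^2 - x^2 := by linarith
          rw [this]
          exact dvd_sub
            (pow_dvd_pow_of_dvd (Int.gcd_dvd_right (a := x) (b := z)) 2)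
            (pow_dvd_pow_of_dvd (Int.gcd_dvd_left (a := x) (b := z)) 2)
        obtain ⟨hnum, hden⟩ := num_den_sq hxz hz
        subst hq
        refine ⟨hnum ▸ sq x, ?_, hden ▸ sq z⟩
        rw [hnum, hden, show x^2 - z^2 = -(y^2) by linarith]
        exact sqneg y
  · rintro q ⟨⟨x,y,z,_,he,hz,hq⟩, ⟨x',y',z',_,he',hz',hq'⟩⟩
    have h1 : 0 ≤ q := by rw [hq]; positivity
    have h2 : q ≤ 0 := by rw [hq']; exact neg_nonpos.mpr (by positivity)
    exact Or.inl (le_antisymm h2 h1)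
  · rintro q ⟨⟨x,y,z,_,he,hz,hq⟩, ⟨x',y',z',_,he',hz',hq'⟩⟩
    have hzq : (0:ℚ) < (z:ℚ)^2 := by
      have : (z:ℚ) ≠ 0 := Int.cast_ne_zero.mpr hz
      positivity
    have hzq' : (0:ℚ) < (z':ℚ)^2 := by
      have : (z':ℚ) ≠ 0 := Int.cast_ne_zero.mpr hz'
      positivity
    have h1 : 1 ≤ q := by
      rw [hq, le_div_iff₀ hzq, one_mul]
      have : z^2 ≤ x^2 := by nlinarith [sq_nonneg y]
      exact_mod_cast this
    have h2 : q ≤ 1 := by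
      rw [hq', div_le_one hzq']
      have : x'^2 ≤ z'^2 := by nlinarith [sq_nonneg y']
      exact_mod_cast this
    exact Or.inr (le_antisymm h2 h1)
  · rintro q ⟨⟨x,y,z,_,he,hz,hq⟩, ⟨x',y',z',_,he',hz',hq'⟩⟩
    have h2 : q ≤ 0 := by rw [hq]; exact neg_nonpos.mpr (by positivity)
    have h1 : 0 ≤ q := by rw [hq']; positivity
    exact Or.inl (le_antisymm h2 h1)
end

section
/- Let d ≥ 1 and let φ₀, φ∞ ∈ ℤ[s,t] be homogeneous polynomials of degree d with no common zero in ℂ² other than (0,0). Let R_φ = { v ∈ ℝ² : max(|φ₀(v)|, |φ∞(v)|) ≤ 1 }, a compact subset of ℝ², and let vol(R_φ) denote its Lebesgue measure. Then there exists C > 0 such that for all real h ≥ 1, |#{(s,t) ∈ ℤ² : max(|φ₀(s,t)|, |φ∞(s,t)|) ≤ h} − vol(R_φ)·h^(2/d)| ≤ C·h^(1/d). -/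
open MvPolynomial MeasureTheory

/-- Evaluation of an integral binary form at a pair of integers. -/
noncomputable def evZ (φ : MvPolynomial (Fin 2) ℤ) (s t : ℤ) : ℤ := eval ![s, t] φ

/-- Evaluation of an integral binary form at a pair of real numbers. -/
noncomputable def evR (φ : MvPolynomial (Fin 2) ℤ) (v : ℝ × ℝ) : ℝ :=
  eval ![v.1, v.2] (map (Int.castRingHom ℝ) φ)

/-- Evaluation of an integral binary form at a pair of complex numbers. -/
noncomputable def evC (φ : MvPolynomial (Fin 2) ℤ) (v : Fin 2 → ℂ) : ℂ :=
  eval v (map (Int.castRingHom ℂ) φ)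

/-- `φ₀` and `φinf` have no common zero in `ℂ²` other than `(0,0)`. -/
def NoCommonZero (φ₀ φinf : MvPolynomial (Fin 2) ℤ) : Prop :=
  ∀ v : Fin 2 → ℂ, evC φ₀ v = 0 → evC φinf v = 0 → v = 0

/-- The region `R_φ = {v ∈ ℝ² : max(|φ₀(v)|, |φinf(v)|) ≤ 1}`. -/
def RegionPhi (φ₀ φinf : MvPolynomial (Fin 2) ℤ) : Set (ℝ × ℝ) :=
  {v | max |evR φ₀ v| |evR φinf v| ≤ 1}

open Pointwise

set_option maxHeartbeats 1000000

/-- `|x^(n+1) - y^(n+1)| ≤ (n+1) R^n |x - y|` when `|x|,|y| ≤ R`. -/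
lemma abs_pow_succ_sub_pow_succ_le {R x y : ℝ} (hx : |x| ≤ R) (hy : |y| ≤ R) :
    ∀ n : ℕ, |x ^ (n+1) - y ^ (n+1)| ≤ (n+1 : ℝ) * R ^ n * |x - y| := by
  have hR : 0 ≤ R := le_trans (abs_nonneg x) hx
  intro n
  induction n with
  | zero => simp
  | succ n ih =>
    have key : x ^ (n+2) - y ^ (n+2)
        = x * (x ^ (n+1) - y ^ (n+1)) + (x - y) * y ^ (n+1) := by ring
    have h1 : |x ^ (n+2) - y ^ (n+2)|
        ≤ |x| * |x ^ (n+1) - y ^ (n+1)| + |x - y| * |y ^ (n+1)| := by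
      rw [key]
      refine (abs_add_le _ _).trans ?_
      rw [abs_mul, abs_mul]
    have h2 : |x| * |x ^ (n+1) - y ^ (n+1)| ≤ R * ((n+1 : ℝ) * R ^ n * |x - y|) := by
      exact mul_le_mul hx ih (abs_nonneg _) hR
    have h3 : |x - y| * |y ^ (n+1)| ≤ |x - y| * R ^ (n+1) := by
      refine mul_le_mul_of_nonneg_left ?_ (abs_nonneg _)
      rw [abs_pow]
      exact pow_le_pow_left₀ (abs_nonneg _) hy _
    have h4 : R * ((n+1 : ℝ) * R ^ n * |x - y|) + |x - y| * R ^ (n+1)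
        = ((n:ℝ)+1+1) * R ^ (n+1) * |x - y| := by ring
    push_cast
    linarith

/-- Monomial increment bound. -/
lemma abs_monomial_sub_le {R δ x0 x1 y0 y1 : ℝ} (hx0 : |x0| ≤ R) (hx1 : |x1| ≤ R)
    (hy0 : |y0| ≤ R) (hy1 : |y1| ≤ R) (hd0 : |x0 - y0| ≤ δ) (hd1 : |x1 - y1| ≤ δ)
    {n m e : ℕ} (hnm : n + m = e + 1) :
    |x0 ^ n * x1 ^ m - y0 ^ n * y1 ^ m| ≤ ((e:ℝ) + 1) * R ^ e * δ := by
  have hR : 0 ≤ R := le_trans (abs_nonneg x0) hx0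
  have hδ : 0 ≤ δ := le_trans (abs_nonneg _) hd0
  rcases m with _ | m
  · -- m = 0, n = e + 1
    obtain rfl : n = e + 1 := by omega
    have := abs_pow_succ_sub_pow_succ_le hx0 hy0 e
    have h2 : ((e:ℝ)+1) * R ^ e * |x0 - y0| ≤ ((e:ℝ)+1) * R ^ e * δ := by
      refine mul_le_mul_of_nonneg_left hd0 (by positivity)
    simp only [pow_zero, mul_one]
    push_cast at this ⊢
    linarith
  · rcases n with _ | n
    · -- n = 0, m + 1 = e + 1
      obtain rfl : e = m := by omega
      have := abs_pow_succ_sub_pow_succ_le hx1 hy1 e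
      have h2 : ((e:ℝ)+1) * R ^ e * |x1 - y1| ≤ ((e:ℝ)+1) * R ^ e * δ :=
        mul_le_mul_of_nonneg_left hd1 (by positivity)
      simp only [pow_zero, one_mul]
      push_cast at this ⊢
      linarith
    · -- both positive, e = n + m + 1
      obtain rfl : e = n + m + 1 := by omega
      have key : x0 ^ (n+1) * x1 ^ (m+1) - y0 ^ (n+1) * y1 ^ (m+1)
          = x0 ^ (n+1) * (x1 ^ (m+1) - y1 ^ (m+1))
            + y1 ^ (m+1) * (x0 ^ (n+1) - y0 ^ (n+1)) := by ring
      have h1 : |x0 ^ (n+1) * x1 ^ (m+1) - y0 ^ (n+1) * y1 ^ (m+1)|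
          ≤ |x0 ^ (n+1)| * |x1 ^ (m+1) - y1 ^ (m+1)|
            + |y1 ^ (m+1)| * |x0 ^ (n+1) - y0 ^ (n+1)| := by
        rw [key]; refine (abs_add_le _ _).trans ?_; rw [abs_mul, abs_mul]
      have hx0p : |x0 ^ (n+1)| ≤ R ^ (n+1) := by
        rw [abs_pow]; exact pow_le_pow_left₀ (abs_nonneg _) hx0 _
      have hy1p : |y1 ^ (m+1)| ≤ R ^ (m+1) := by
        rw [abs_pow]; exact pow_le_pow_left₀ (abs_nonneg _) hy1 _
      have hA := abs_pow_succ_sub_pow_succ_le hx1 hy1 m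
      have hB := abs_pow_succ_sub_pow_succ_le hx0 hy0 n
      have h2 : |x0 ^ (n+1)| * |x1 ^ (m+1) - y1 ^ (m+1)|
          ≤ R ^ (n+1) * (((m:ℝ)+1) * R ^ m * δ) := by
        refine mul_le_mul hx0p (hA.trans (mul_le_mul_of_nonneg_left hd1 (by positivity)))
          (abs_nonneg _) (by positivity)
      have h3 : |y1 ^ (m+1)| * |x0 ^ (n+1) - y0 ^ (n+1)|
          ≤ R ^ (m+1) * (((n:ℝ)+1) * R ^ n * δ) := by
        refine mul_le_mul hy1p (hB.trans (mul_le_mul_of_nonneg_left hd0 (by positivity)))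
          (abs_nonneg _) (by positivity)
      have h4 : R ^ (n+1) * (((m:ℝ)+1) * R ^ m * δ) + R ^ (m+1) * (((n:ℝ)+1) * R ^ n * δ)
          = (((n:ℝ)+(m:ℝ)+1) + 1) * R ^ (n+m+1) * δ := by ring
      push_cast
      push_cast at h1 h2 h3 h4
      linarith

/-- degree of a monomial of a homogeneous binary polynomial -/
lemma support_degree_sum {d : ℕ} {ψ : MvPolynomial (Fin 2) ℝ} (hψ : ψ.IsHomogeneous d)
    {a : Fin 2 →₀ ℕ} (ha : a ∈ ψ.support) : a 0 + a 1 = d := by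
  have h := hψ (mem_support_iff.mp ha)
  rw [Finsupp.weight_apply] at h
  rw [← h]
  rw [Finsupp.sum_fintype]
  · simp [Fin.sum_univ_two]
  · intro i; simp

lemma eval_smul_homog {d : ℕ} {ψ : MvPolynomial (Fin 2) ℝ} (hψ : ψ.IsHomogeneous d)
    (c : ℝ) (x : Fin 2 → ℝ) : eval (c • x) ψ = c ^ d * eval x ψ := by
  rw [eval_eq', eval_eq', Finset.mul_sum]
  refine Finset.sum_congr rfl fun a ha => ?_
  have hdeg : a 0 + a 1 = d := support_degree_sum hψ ha
  rw [Fin.prod_univ_two, Fin.prod_univ_two]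
  simp only [Pi.smul_apply, smul_eq_mul, mul_pow]
  rw [← hdeg, pow_add]
  ring

lemma evR_intCast (φ : MvPolynomial (Fin 2) ℤ) (s t : ℤ) :
    evR φ ((s:ℝ), (t:ℝ)) = (evZ φ s t : ℝ) := by
  unfold evR evZ
  rw [eval_map]
  rw [show ((eval ![s, t] φ : ℤ) : ℝ) = (Int.castRingHom ℝ) (eval ![s, t] φ) from rfl]
  rw [show (eval ![s, t] φ) = eval₂ (RingHom.id ℤ) ![s, t] φ by rw [eval₂_id]]
  rw [eval₂_comp_left (Int.castRingHom ℝ) (RingHom.id ℤ) ![s, t] φ]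
  congr 1
  funext i
  fin_cases i <;> simp

lemma evC_ofReal (φ : MvPolynomial (Fin 2) ℤ) (v : ℝ × ℝ) :
    evC φ (fun i => ((![v.1, v.2] i : ℝ) : ℂ)) = ((evR φ v : ℝ) : ℂ) := by
  unfold evC evR
  rw [eval_map, eval_map]
  rw [show ((eval₂ (Int.castRingHom ℝ) ![v.1, v.2] φ : ℝ) : ℂ)
      = Complex.ofRealHom (eval₂ (Int.castRingHom ℝ) ![v.1, v.2] φ) from rfl]
  rw [eval₂_comp_left Complex.ofRealHom (Int.castRingHom ℝ) ![v.1, v.2] φ]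
  congr 1

lemma evR_continuous (φ : MvPolynomial (Fin 2) ℤ) : Continuous (evR φ) := by
  have h1 : Continuous (fun v : ℝ × ℝ => (![v.1, v.2] : Fin 2 → ℝ)) := by
    refine continuous_pi fun i => ?_
    fin_cases i
    · simpa using continuous_fst
    · simpa using continuous_snd
  exact (MvPolynomial.continuous_eval _).comp h1

lemma fst_abs_le_norm (v : ℝ × ℝ) : |v.1| ≤ ‖v‖ := by
  rw [Prod.norm_def]; exact le_max_left _ _

lemma snd_abs_le_norm (v : ℝ × ℝ) : |v.2| ≤ ‖v‖ := by
  rw [Prod.norm_def]; exact le_max_right _ _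

/-- Lipschitz-type bound for a homogeneous integral binary form. -/
lemma evR_lip (φ : MvPolynomial (Fin 2) ℤ) {e : ℕ} (hφ : φ.IsHomogeneous (e + 1)) :
    ∃ L : ℝ, 0 ≤ L ∧ ∀ R : ℝ, 1 ≤ R → ∀ u v : ℝ × ℝ, ‖u‖ ≤ R → ‖v‖ ≤ R →
      |evR φ u - evR φ v| ≤ L * R ^ e * ‖u - v‖ := by
  set ψ := map (Int.castRingHom ℝ) φ with hψdef
  have hψ : ψ.IsHomogeneous (e + 1) := hφ.map _
  refine ⟨∑ a ∈ ψ.support, |coeff a ψ| * ((e:ℝ)+1), by positivity, ?_⟩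
  intro R hR u v hu hv
  have hR0 : 0 ≤ R := le_trans zero_le_one hR
  have habs : ∀ w : ℝ × ℝ, ‖w‖ ≤ R → |w.1| ≤ R ∧ |w.2| ≤ R := fun w hw =>
    ⟨(fst_abs_le_norm w).trans hw, (snd_abs_le_norm w).trans hw⟩
  obtain ⟨hu1, hu2⟩ := habs u hu
  obtain ⟨hv1, hv2⟩ := habs v hv
  have hd1 : |u.1 - v.1| ≤ ‖u - v‖ := by
    simpa using fst_abs_le_norm (u - v)
  have hd2 : |u.2 - v.2| ≤ ‖u - v‖ := by
    simpa using snd_abs_le_norm (u - v)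
  have hev : ∀ w : ℝ × ℝ, evR φ w = ∑ a ∈ ψ.support, coeff a ψ * (w.1 ^ a 0 * w.2 ^ a 1) := by
    intro w
    rw [show evR φ w = eval ![w.1, w.2] ψ from rfl, eval_eq']
    refine Finset.sum_congr rfl fun a _ => ?_
    rw [Fin.prod_univ_two]
    simp
  rw [hev u, hev v, ← Finset.sum_sub_distrib]
  refine (Finset.abs_sum_le_sum_abs _ _).trans ?_
  rw [Finset.sum_mul, Finset.sum_mul]
  refine Finset.sum_le_sum fun a ha => ?_
  have hdeg := support_degree_sum hψ ha
  have hmono := abs_monomial_sub_le hu1 hu2 hv1 hv2 hd1 hd2 hdeg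
  calc |coeff a ψ * (u.1 ^ a 0 * u.2 ^ a 1) - coeff a ψ * (v.1 ^ a 0 * v.2 ^ a 1)|
      = |coeff a ψ| * |u.1 ^ a 0 * u.2 ^ a 1 - v.1 ^ a 0 * v.2 ^ a 1| := by
        rw [← abs_mul]; ring_nf
    _ ≤ |coeff a ψ| * (((e:ℝ) + 1) * R ^ e * ‖u - v‖) :=
        mul_le_mul_of_nonneg_left hmono (abs_nonneg _)
    _ = |coeff a ψ| * ((e:ℝ)+1) * R ^ e * ‖u - v‖ := by ring

lemma lattice_count (F : ℝ × ℝ → ℝ) (e : ℕ)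
    (hF0 : ∀ v, 0 ≤ F v)
    (hcont : Continuous F)
    (hhom : ∀ c : ℝ, 0 ≤ c → ∀ v, F (c • v) = c ^ (e+1) * F v)
    (hker : ∀ v, F v = 0 → v = 0)
    (L : ℝ) (hL : 0 ≤ L)
    (hlip : ∀ R : ℝ, 1 ≤ R → ∀ u v : ℝ × ℝ, ‖u‖ ≤ R → ‖v‖ ≤ R →
      |F u - F v| ≤ L * R ^ e * ‖u - v‖) :
    ∃ C : ℝ, 0 < C ∧ ∀ h : ℝ, 1 ≤ h →
      |({p : ℤ × ℤ | F ((p.1 : ℝ), (p.2 : ℝ)) ≤ h}.ncard : ℝ) -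
        (volume {v : ℝ × ℝ | F v ≤ 1}).toReal * h ^ ((2:ℝ)/(e+1:ℕ))| ≤
        C * h ^ ((1:ℝ)/(e+1:ℕ)) := by
  have hF00 : F 0 = 0 := by
    have := hhom 0 le_rfl 0
    simpa using this
  -- minimum on the sphere
  obtain ⟨u₀, hu₀s, hmin⟩ := (isCompact_sphere (0 : ℝ × ℝ) 1).exists_isMinOn
    ⟨((1:ℝ), (0:ℝ)), by simp [mem_sphere_zero_iff_norm, Prod.norm_def]⟩
    hcont.continuousOn
  set m := F u₀ with hmdef
  have hu₀n : ‖u₀‖ = 1 := mem_sphere_zero_iff_norm.mp hu₀s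
  have hm : 0 < m := by
    rcases (hF0 u₀).lt_or_eq with h | h
    · exact h
    · exfalso; rw [hker u₀ h.symm, norm_zero] at hu₀n; exact zero_ne_one hu₀n
  -- lower bound F v ≥ m ‖v‖^d
  have hlow : ∀ v : ℝ × ℝ, m * ‖v‖ ^ (e+1) ≤ F v := by
    intro v
    rcases eq_or_ne v 0 with rfl | hv
    · simp [hF00]
    · have hnv : 0 < ‖v‖ := norm_pos_iff.mpr hv
      have hus : ‖v‖⁻¹ • v ∈ Metric.sphere (0 : ℝ × ℝ) 1 := by
        rw [mem_sphere_zero_iff_norm, norm_smul, norm_inv, norm_norm,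
          inv_mul_cancel₀ hnv.ne']
      have h1 : m ≤ F (‖v‖⁻¹ • v) := hmin hus
      have h2 : F v = ‖v‖ ^ (e+1) * F (‖v‖⁻¹ • v) := by
        conv_lhs => rw [← smul_inv_smul₀ hnv.ne' v]
        rw [hhom ‖v‖ hnv.le]
      rw [h2]
      have := pow_pos hnv (e+1)
      nlinarith
  -- the region
  set Reg := {v : ℝ × ℝ | F v ≤ 1} with hRegdef
  have hRegClosed : IsClosed Reg := isClosed_le hcont continuous_const
  have hRegBdd : Reg ⊆ Metric.closedBall 0 (max 1 (1/m)) := by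
    intro v hv
    rw [Metric.mem_closedBall, dist_zero_right]
    rcases le_or_gt ‖v‖ 1 with h1 | h1
    · exact h1.trans (le_max_left _ _)
    · refine le_trans ?_ (le_max_right _ _)
      have h2 : ‖v‖ ≤ ‖v‖ ^ (e+1) := le_self_pow₀ h1.le (by omega)
      have h3 : m * ‖v‖ ^ (e+1) ≤ 1 := le_trans (hlow v) hv
      rw [le_div_iff₀ hm]
      nlinarith
  have hRegFin : volume Reg ≠ ⊤ := by
    refine ne_of_lt (lt_of_le_of_lt (measure_mono hRegBdd) ?_)
    exact measure_closedBall_lt_top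
  set VR := (volume Reg).toReal with hVRdef
  have hVR0 : 0 ≤ VR := ENNReal.toReal_nonneg
  -- scaling
  have hscale : ∀ t : ℝ, 0 ≤ t →
      volume {v : ℝ × ℝ | F v ≤ t ^ (e+1)} = ENNReal.ofReal (t^2) * volume Reg := by
    intro t ht
    have hset : {v : ℝ × ℝ | F v ≤ t ^ (e+1)} = t • Reg := by
      rcases ht.lt_or_eq with h0 | h0
      · ext v
        rw [Set.mem_smul_set_iff_inv_smul_mem₀ h0.ne']
        simp only [Set.mem_setOf_eq, hRegdef]
        rw [hhom t⁻¹ (by positivity) v, inv_pow]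
        rw [inv_mul_le_iff₀ (pow_pos h0 _), mul_one]
      · rw [← h0]
        have hz : {v : ℝ × ℝ | F v ≤ (0:ℝ) ^ (e+1)} = {0} := by
          ext v
          simp only [Set.mem_setOf_eq, zero_pow (Nat.succ_ne_zero e), Set.mem_singleton_iff]
          constructor
          · intro hv; exact hker v (le_antisymm hv (hF0 v))
          · rintro rfl; simp [hF00]
        rw [hz, Set.zero_smul_set ⟨0, by simp [hRegdef, hF00]⟩]
        exact Set.singleton_zero
    rw [hset, MeasureTheory.Measure.addHaar_smul]
    congr 2
    rw [show Module.finrank ℝ (ℝ × ℝ) = 2 by simp]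
    rw [abs_of_nonneg (by positivity)]
  -- unit squares
  set Sq : ℤ × ℤ → Set (ℝ × ℝ) := fun p =>
    Set.Ico ((p.1:ℝ)) ((p.1:ℝ)+1) ×ˢ Set.Ico ((p.2:ℝ)) ((p.2:ℝ)+1) with hSqdef
  have hSqMeas : ∀ p, MeasurableSet (Sq p) := fun p =>
    measurableSet_Ico.prod measurableSet_Ico
  have hSqVol : ∀ p, volume (Sq p) = 1 := by
    intro p
    rw [hSqdef]
    simp only []
    rw [show (volume : Measure (ℝ × ℝ)) = (volume : Measure ℝ).prod volume from rfl]
    rw [MeasureTheory.Measure.prod_prod, Real.volume_Ico, Real.volume_Ico]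
    simp
  have hmem_iff : ∀ (v : ℝ × ℝ) (p : ℤ × ℤ),
      v ∈ Sq p ↔ ⌊v.1⌋ = p.1 ∧ ⌊v.2⌋ = p.2 := by
    intro v p
    rw [hSqdef]
    simp only [Set.mem_prod, Set.mem_Ico, Int.floor_eq_iff]
  have hdisj : ∀ s : Finset (ℤ × ℤ), (↑s : Set (ℤ × ℤ)).PairwiseDisjoint Sq := by
    intro s p _ q _ hpq
    refine Set.disjoint_left.mpr fun v hvp hvq => hpq ?_
    obtain ⟨h1, h2⟩ := (hmem_iff v p).mp hvp
    obtain ⟨h3, h4⟩ := (hmem_iff v q).mp hvq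
    exact Prod.ext (by omega) (by omega)
  have hUnionVol : ∀ T : Finset (ℤ × ℤ), volume (⋃ p ∈ T, Sq p) = T.card := by
    intro T
    rw [measure_biUnion_finset (hdisj T) (fun b _ => hSqMeas b)]
    simp [hSqVol]
  have hfloor_mem : ∀ v : ℝ × ℝ, v ∈ Sq (⌊v.1⌋, ⌊v.2⌋) := by
    intro v; rw [hmem_iff]; exact ⟨rfl, rfl⟩
  have hSqnear : ∀ (v : ℝ × ℝ) (p : ℤ × ℤ), v ∈ Sq p →
      ‖v - ((p.1:ℝ), (p.2:ℝ))‖ ≤ 1 := by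
    intro v p hv
    rw [hSqdef] at hv
    simp only [Set.mem_prod, Set.mem_Ico] at hv
    rw [Prod.norm_def]
    refine max_le ?_ ?_
    · rw [show (v - ((p.1:ℝ), (p.2:ℝ))).1 = v.1 - (p.1:ℝ) from rfl, Real.norm_eq_abs, abs_le]
      constructor <;> [linarith [hv.1.1]; linarith [hv.1.2]]
    · rw [show (v - ((p.1:ℝ), (p.2:ℝ))).2 = v.2 - (p.2:ℝ) from rfl, Real.norm_eq_abs, abs_le]
      constructor <;> [linarith [hv.2.1]; linarith [hv.2.2]]
  -- constants
  set r₀ : ℝ := max 1 ((1/m) ^ ((1:ℝ)/(e+1:ℕ))) with hr₀def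
  have hr₀ : 1 ≤ r₀ := le_max_left _ _
  set K : ℝ := L * (r₀ + 2) ^ e + 1 with hKdef
  have hK : 0 < K := by positivity
  refine ⟨(2*K + K^2) * VR + 1, by positivity, ?_⟩
  intro h hh
  have hh0 : (0:ℝ) ≤ h := le_trans zero_le_one hh
  set a : ℝ := h ^ ((1:ℝ)/(e+1:ℕ)) with hadef
  have ha1 : 1 ≤ a := Real.one_le_rpow hh (by positivity)
  have ha0 : 0 < a := lt_of_lt_of_le zero_lt_one ha1
  have had : a ^ (e+1) = h := by
    rw [hadef, ← Real.rpow_natCast (h ^ ((1:ℝ)/(e+1:ℕ))) (e+1), ← Real.rpow_mul hh0]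
    rw [show (1:ℝ)/(e+1:ℕ) * ((e+1:ℕ):ℝ) = 1 by
      push_cast; field_simp]
    exact Real.rpow_one h
  have ha2 : h ^ ((2:ℝ)/(e+1:ℕ)) = a ^ 2 := by
    rw [hadef, ← Real.rpow_natCast (h ^ ((1:ℝ)/(e+1:ℕ))) 2, ← Real.rpow_mul hh0]
    congr 1
    push_cast; ring
  -- ball bound
  have hBall : ∀ v : ℝ × ℝ, F v ≤ h → ‖v‖ ≤ r₀ * a := by
    intro v hv
    have h1 : m * ‖v‖ ^ (e+1) ≤ h := le_trans (hlow v) hv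
    have h2 : ‖v‖ ^ (e+1) ≤ h * (1/m) := by
      rw [mul_one_div, le_div_iff₀ hm]; nlinarith
    have h3 : ‖v‖ ≤ (h * (1/m)) ^ ((1:ℝ)/(e+1:ℕ)) := by
      rw [show ((1:ℝ)/((e+1:ℕ):ℝ)) = (((e+1:ℕ):ℝ))⁻¹ from one_div _]
      calc ‖v‖ = (‖v‖ ^ (e+1)) ^ (((e+1:ℕ):ℝ))⁻¹ :=
            (Real.pow_rpow_inv_natCast (norm_nonneg v) (Nat.succ_ne_zero e)).symm
        _ ≤ (h * (1/m)) ^ (((e+1:ℕ):ℝ))⁻¹ :=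
            Real.rpow_le_rpow (by positivity) h2 (by positivity)
    refine h3.trans ?_
    rw [Real.mul_rpow hh0 (by positivity)]
    calc h ^ ((1:ℝ)/(e+1:ℕ)) * (1/m) ^ ((1:ℝ)/(e+1:ℕ))
        ≤ a * r₀ := by
          rw [hadef]
          exact mul_le_mul_of_nonneg_left (le_max_right _ _) (by positivity)
      _ = r₀ * a := mul_comm _ _
  -- the lattice set
  set S := {p : ℤ × ℤ | F ((p.1 : ℝ), (p.2 : ℝ)) ≤ h} with hSdef
  have hScoord : ∀ p ∈ S, |(p.1:ℝ)| ≤ r₀ * a ∧ |(p.2:ℝ)| ≤ r₀ * a := by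
    intro p hp
    have hb := hBall _ hp
    exact ⟨(fst_abs_le_norm ((p.1:ℝ), (p.2:ℝ))).trans hb,
      (snd_abs_le_norm ((p.1:ℝ), (p.2:ℝ))).trans hb⟩
  have hSfin : S.Finite := by
    set N : ℤ := ⌊r₀ * a⌋ + 1 with hNdef
    refine Set.Finite.subset (Set.finite_Icc ((-N, -N) : ℤ × ℤ) ((N, N) : ℤ × ℤ)) ?_
    intro p hp
    obtain ⟨h1, h2⟩ := hScoord p hp
    have hfl := Int.lt_floor_add_one (r₀ * a)
    have hb1 := abs_le.mp h1
    have hb2 := abs_le.mp h2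
    have e1 : p.1 ≤ N := by
      have : (p.1 : ℝ) ≤ (N : ℝ) := by rw [hNdef]; push_cast; linarith [hb1.2, hfl]
      exact_mod_cast this
    have e2 : -N ≤ p.1 := by
      have : ((-N : ℤ) : ℝ) ≤ (p.1 : ℝ) := by rw [hNdef]; push_cast; linarith [hb1.1, hfl]
      exact_mod_cast this
    have e3 : p.2 ≤ N := by
      have : (p.2 : ℝ) ≤ (N : ℝ) := by rw [hNdef]; push_cast; linarith [hb2.2, hfl]
      exact_mod_cast this
    have e4 : -N ≤ p.2 := by
      have : ((-N : ℤ) : ℝ) ≤ (p.2 : ℝ) := by rw [hNdef]; push_cast; linarith [hb2.1, hfl]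
      exact_mod_cast this
    exact Set.mem_Icc.mpr ⟨⟨e2, e4⟩, ⟨e1, e3⟩⟩
  set T := hSfin.toFinset with hTdef
  have hNcard : (S.ncard : ℝ) = (T.card : ℝ) := by
    rw [Set.ncard_eq_toFinset_card S hSfin]
  -- Lipschitz increment over a unit square
  have hstep : ∀ u w : ℝ × ℝ, ‖u‖ ≤ (r₀ + 2) * a → ‖w‖ ≤ (r₀ + 2) * a → ‖u - w‖ ≤ 1 →
      |F u - F w| ≤ K * a ^ e := by
    intro u w hu hw huw
    have hRr1 : 1 ≤ (r₀ + 2) * a := by nlinarith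
    have hl := hlip ((r₀ + 2) * a) hRr1 u w hu hw
    have hae : (0:ℝ) < a ^ e := pow_pos ha0 e
    calc |F u - F w| ≤ L * ((r₀ + 2) * a) ^ e * ‖u - w‖ := hl
      _ ≤ L * ((r₀ + 2) * a) ^ e * 1 := by
          refine mul_le_mul_of_nonneg_left huw (by positivity)
      _ = L * (r₀ + 2) ^ e * a ^ e := by rw [mul_pow]; ring
      _ ≤ K * a ^ e := by
          rw [hKdef]; nlinarith
  -- upper bound
  have hUp : (T.card : ℝ) ≤ (a + K) ^ 2 * VR := by
    have hsub : (⋃ p ∈ T, Sq p) ⊆ {v : ℝ × ℝ | F v ≤ (a + K) ^ (e+1)} := by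
      intro v hv
      simp only [Set.mem_iUnion, exists_prop] at hv
      obtain ⟨p, hpT, hvp⟩ := hv
      have hpS : p ∈ S := (Set.Finite.mem_toFinset hSfin).mp hpT
      set q : ℝ × ℝ := ((p.1:ℝ), (p.2:ℝ)) with hqdef
      have hqn : ‖q‖ ≤ r₀ * a := hBall q hpS
      have hnear : ‖v - q‖ ≤ 1 := hSqnear v p hvp
      have hvn : ‖v‖ ≤ (r₀ + 2) * a := by
        have := norm_sub_norm_le v q
        nlinarith [this, hnear, hqn]
      have hFq : F q ≤ h := hpS
      have hinc := hstep v q hvn (by nlinarith) hnear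
      have habs := (abs_le.mp hinc).2
      have h7 : a ^ (e+1) + K * a ^ e ≤ (a + K) ^ (e+1) := by
        have h8 : a ^ e ≤ (a + K) ^ e := pow_le_pow_left₀ ha0.le (by linarith) e
        have h9 : (a + K) ^ (e+1) = (a + K) ^ e * (a + K) := pow_succ _ _
        have h10 : a ^ (e+1) = a ^ e * a := pow_succ _ _
        nlinarith [pow_nonneg ha0.le e]
      show F v ≤ (a + K) ^ (e+1)
      calc F v ≤ F q + K * a ^ e := by linarith
        _ ≤ h + K * a ^ e := by linarith
        _ = a ^ (e+1) + K * a ^ e := by rw [had]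
        _ ≤ (a + K) ^ (e+1) := h7
    have hv1 : volume (⋃ p ∈ T, Sq p) ≤ volume {v : ℝ × ℝ | F v ≤ (a + K) ^ (e+1)} :=
      measure_mono hsub
    rw [hUnionVol T, hscale (a + K) (by positivity)] at hv1
    have hfin2 : ENNReal.ofReal ((a + K) ^ 2) * volume Reg ≠ ⊤ :=
      ENNReal.mul_ne_top ENNReal.ofReal_ne_top hRegFin
    have := (ENNReal.toReal_le_toReal (by simp) hfin2).mpr hv1
    rwa [ENNReal.toReal_natCast, ENNReal.toReal_mul,
      ENNReal.toReal_ofReal (by positivity)] at this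
  -- lower bound (when K ≤ a)
  have hLowB : K ≤ a → (a - K) ^ 2 * VR ≤ (T.card : ℝ) := by
    intro hKa
    have htK : (0:ℝ) ≤ a - K := by linarith
    have hsub2 : {v : ℝ × ℝ | F v ≤ (a - K) ^ (e+1)} ⊆ ⋃ p ∈ T, Sq p := by
      intro v hv
      simp only [Set.mem_setOf_eq] at hv
      have h9 : (a - K) ^ (e+1) ≤ a ^ (e+1) := pow_le_pow_left₀ htK (by linarith) _
      have hvh : F v ≤ h := by rw [← had]; exact le_trans hv h9
      have hvB : ‖v‖ ≤ r₀ * a := hBall v hvh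
      set p : ℤ × ℤ := (⌊v.1⌋, ⌊v.2⌋) with hpdef
      have hvp : v ∈ Sq p := hfloor_mem v
      set q : ℝ × ℝ := ((p.1:ℝ), (p.2:ℝ)) with hqdef
      have hnear : ‖v - q‖ ≤ 1 := hSqnear v p hvp
      have hqn : ‖q‖ ≤ (r₀ + 2) * a := by
        have h11 := norm_sub_norm_le q v
        rw [norm_sub_rev q v] at h11
        nlinarith
      have hinc := hstep q v hqn (by nlinarith) (by rwa [norm_sub_rev])
      have habs := (abs_le.mp hinc).2
      have h11 : (a - K) ^ (e+1) + K * a ^ e ≤ a ^ (e+1) := by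
        have h12 : (a - K) ^ e ≤ a ^ e := pow_le_pow_left₀ htK (by linarith) e
        have h13 : (a - K) ^ (e+1) = (a - K) ^ e * (a - K) := pow_succ _ _
        have h14 : a ^ (e+1) = a ^ e * a := pow_succ _ _
        nlinarith [pow_nonneg htK e]
      have hpS : p ∈ T := by
        refine (Set.Finite.mem_toFinset hSfin).mpr ?_
        show F q ≤ h
        rw [← had]
        calc F q ≤ F v + K * a ^ e := by linarith
          _ ≤ (a - K) ^ (e+1) + K * a ^ e := by linarith
          _ ≤ a ^ (e+1) := h11
      exact Set.mem_biUnion hpS hvp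
    have hv2 : volume {v : ℝ × ℝ | F v ≤ (a - K) ^ (e+1)} ≤ volume (⋃ p ∈ T, Sq p) :=
      measure_mono hsub2
    rw [hUnionVol T, hscale (a - K) htK] at hv2
    have hfin2 : ENNReal.ofReal ((a - K) ^ 2) * volume Reg ≠ ⊤ :=
      ENNReal.mul_ne_top ENNReal.ofReal_ne_top hRegFin
    have := (ENNReal.toReal_le_toReal hfin2 (by simp)).mpr hv2
    rwa [ENNReal.toReal_natCast, ENNReal.toReal_mul,
      ENNReal.toReal_ofReal (by positivity)] at this
  -- assemble
  rw [ha2, hNcard]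
  have hTnn : (0:ℝ) ≤ (T.card : ℝ) := Nat.cast_nonneg _
  rw [abs_le]
  constructor
  · -- -(C*a) ≤ T.card - VR * a^2
    rcases le_or_gt K a with hKa | hKa
    · have := hLowB hKa
      nlinarith [mul_nonneg hVR0 (sq_nonneg K), mul_nonneg (mul_nonneg hVR0 (sq_nonneg K)) (by linarith : (0:ℝ) ≤ a - 1)]
    · nlinarith [mul_nonneg hVR0 hK.le, mul_nonneg (mul_nonneg hVR0 hK.le) ha0.le]
  · rcases le_or_gt K a with hKa | hKa
    · nlinarith [hUp, mul_nonneg hVR0 (sq_nonneg K), mul_nonneg (mul_nonneg hVR0 (sq_nonneg K)) (by linarith : (0:ℝ) ≤ a - 1)]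
    · nlinarith [hUp, mul_nonneg hVR0 (sq_nonneg K), mul_nonneg (mul_nonneg hVR0 (sq_nonneg K)) (by linarith : (0:ℝ) ≤ a - 1)]

lemma evR_smul (φ : MvPolynomial (Fin 2) ℤ) {d : ℕ} (hφ : φ.IsHomogeneous d)
    (c : ℝ) (v : ℝ × ℝ) : evR φ (c • v) = c ^ d * evR φ v := by
  unfold evR
  rw [show (![(c • v).1, (c • v).2] : Fin 2 → ℝ) = c • ![v.1, v.2] by
    funext i; fin_cases i <;> simp]
  exact eval_smul_homog (hφ.map _) c _

theorem stmt10 (d : ℕ) (hd : 1 ≤ d) (φ₀ φinf : MvPolynomial (Fin 2) ℤ)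
    (h₀ : φ₀.IsHomogeneous d) (hinf : φinf.IsHomogeneous d)
    (hnc : NoCommonZero φ₀ φinf) :
    ∃ C : ℝ, 0 < C ∧ ∀ h : ℝ, 1 ≤ h →
      |({p : ℤ × ℤ | (max |evZ φ₀ p.1 p.2| |evZ φinf p.1 p.2| : ℝ) ≤ h}.ncard : ℝ) -
        (volume (RegionPhi φ₀ φinf)).toReal * h ^ ((2 : ℝ) / d)| ≤
      C * h ^ ((1 : ℝ) / d) := by
  obtain ⟨e, rfl⟩ : ∃ e, d = e + 1 := ⟨d - 1, by omega⟩
  set F : ℝ × ℝ → ℝ := fun v => max |evR φ₀ v| |evR φinf v| with hFdef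
  have hF0 : ∀ v, 0 ≤ F v := fun v => le_trans (abs_nonneg _) (le_max_left _ _)
  have hcont : Continuous F :=
    ((evR_continuous φ₀).abs.max (evR_continuous φinf).abs)
  have hhom : ∀ c : ℝ, 0 ≤ c → ∀ v, F (c • v) = c ^ (e+1) * F v := by
    intro c hc v
    rw [hFdef]
    simp only []
    rw [evR_smul φ₀ h₀, evR_smul φinf hinf, abs_mul, abs_mul, abs_pow,
      abs_of_nonneg hc]
    exact (mul_max_of_nonneg _ _ (by positivity)).symm
  have hker : ∀ v, F v = 0 → v = 0 := by
    intro v hv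
    have h1 : evR φ₀ v = 0 := by
      have h2 : |evR φ₀ v| ≤ 0 := hv ▸ le_max_left _ _
      exact abs_eq_zero.mp (le_antisymm h2 (abs_nonneg _))
    have h2 : evR φinf v = 0 := by
      have h3 : |evR φinf v| ≤ 0 := hv ▸ le_max_right _ _
      exact abs_eq_zero.mp (le_antisymm h3 (abs_nonneg _))
    have h3 := hnc (fun i => ((![v.1, v.2] i : ℝ) : ℂ))
      (by rw [evC_ofReal, h1, Complex.ofReal_zero])
      (by rw [evC_ofReal, h2, Complex.ofReal_zero])
    have h4 : (v.1 : ℂ) = 0 := by simpa using congrFun h3 0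
    have h5 : (v.2 : ℂ) = 0 := by simpa using congrFun h3 1
    exact Prod.ext_iff.mpr ⟨Complex.ofReal_eq_zero.mp h4, Complex.ofReal_eq_zero.mp h5⟩
  obtain ⟨L₀, hL₀, hlip₀⟩ := evR_lip φ₀ h₀
  obtain ⟨L₁, hL₁, hlip₁⟩ := evR_lip φinf hinf
  have hlip : ∀ R : ℝ, 1 ≤ R → ∀ u v : ℝ × ℝ, ‖u‖ ≤ R → ‖v‖ ≤ R →
      |F u - F v| ≤ (L₀ + L₁) * R ^ e * ‖u - v‖ := by
    intro R hR u v hu hv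
    have hR0 : (0:ℝ) ≤ R := le_trans zero_le_one hR
    have h1 := hlip₀ R hR u v hu hv
    have h2 := hlip₁ R hR u v hu hv
    have key : (L₀ + L₁) * R ^ e * ‖u - v‖
        = L₀ * R ^ e * ‖u - v‖ + L₁ * R ^ e * ‖u - v‖ := by ring
    have hnn₀ : 0 ≤ L₀ * R ^ e * ‖u - v‖ := by positivity
    have hnn₁ : 0 ≤ L₁ * R ^ e * ‖u - v‖ := by positivity
    calc |F u - F v|
        ≤ max (|(|evR φ₀ u|) - (|evR φ₀ v|)|) (|(|evR φinf u|) - (|evR φinf v|)|) :=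
          abs_max_sub_max_le_max _ _ _ _
      _ ≤ max |evR φ₀ u - evR φ₀ v| |evR φinf u - evR φinf v| :=
          max_le_max (abs_abs_sub_abs_le_abs_sub _ _) (abs_abs_sub_abs_le_abs_sub _ _)
      _ ≤ (L₀ + L₁) * R ^ e * ‖u - v‖ :=
          max_le (h1.trans (by linarith)) (h2.trans (by linarith))
  obtain ⟨C, hC, hb⟩ := lattice_count F e hF0 hcont hhom hker (L₀ + L₁)
    (by linarith) hlip
  refine ⟨C, hC, fun h hh => ?_⟩
  have hthis := hb h hh
  have hsets : {p : ℤ × ℤ | (max |evZ φ₀ p.1 p.2| |evZ φinf p.1 p.2| : ℝ) ≤ h}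
      = {p : ℤ × ℤ | F ((p.1 : ℝ), (p.2 : ℝ)) ≤ h} := by
    ext p
    simp only [Set.mem_setOf_eq]
    have heq : (max |evZ φ₀ p.1 p.2| |evZ φinf p.1 p.2| : ℝ)
        = F ((p.1 : ℝ), (p.2 : ℝ)) := by
      rw [hFdef]
      simp only []
      rw [evR_intCast, evR_intCast]
    rw [heq]
  have hreg : RegionPhi φ₀ φinf = {v : ℝ × ℝ | F v ≤ 1} := rfl
  rw [hsets, hreg]
  exact hthis
end

section
/- Let d ≥ 1 and let φ₀, φ∞ ∈ ℤ[s,t] be homogeneous polynomials of degree d with no common zero in ℂ² other than (0,0). Then: (i) for every q ∈ Ω(φ), the number of pairs (s,t) ∈ ℤ² with gcd(s,t) = 1, (s > 0 or (s = 0 and t > 0)), φ∞(s,t) ≠ 0 and φ₀(s,t)/φ∞(s,t) = q is at least 1 and at most d; (ii) consequently, for every h > 0, N_φ(h)/d ≤ N(Ω(φ); h) ≤ N_φ(h). -/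
open Filter MvPolynomial

/-- Multiplicative height of a rational number. -/
def Ht (q : ℚ) : ℕ := max q.num.natAbs q.den

/-- Counting function: number of elements of `Ω` of height at most `h`. -/
noncomputable def NCount (Ω : Set ℚ) (h : ℝ) : ℕ := {q ∈ Ω | (Ht q : ℝ) ≤ h}.ncard

/-- The image `Ω(φ)` of `φ = (φ₀ : φinf)` on coprime integer pairs. -/
def OmegaPhi (φ₀ φinf : MvPolynomial (Fin 2) ℤ) : Set ℚ :=
  {q | ∃ s t : ℤ, Int.gcd s t = 1 ∧ evZ φinf s t ≠ 0 ∧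
    q = (evZ φ₀ s t : ℚ) / (evZ φinf s t : ℚ)}

/-- The fiber of `φ` over `q`, with coprime pairs normalized so that
`(s > 0) ∨ (s = 0 ∧ t > 0)`. -/
def Fiber (φ₀ φinf : MvPolynomial (Fin 2) ℤ) (q : ℚ) : Set (ℤ × ℤ) :=
  {p | Int.gcd p.1 p.2 = 1 ∧ (0 < p.1 ∨ (p.1 = 0 ∧ 0 < p.2)) ∧
    evZ φinf p.1 p.2 ≠ 0 ∧ (evZ φ₀ p.1 p.2 : ℚ) / (evZ φinf p.1 p.2 : ℚ) = q}

/-- `N_φ(h)`: the number of normalized coprime pairs `(s,t)` with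
`Ht(φ₀(s,t)/φinf(s,t)) ≤ h`. -/
noncomputable def NPhi (φ₀ φinf : MvPolynomial (Fin 2) ℤ) (h : ℝ) : ℕ :=
  {p : ℤ × ℤ | Int.gcd p.1 p.2 = 1 ∧ (0 < p.1 ∨ (p.1 = 0 ∧ 0 < p.2)) ∧
    evZ φinf p.1 p.2 ≠ 0 ∧
    (Ht ((evZ φ₀ p.1 p.2 : ℚ) / (evZ φinf p.1 p.2 : ℚ)) : ℝ) ≤ h}.ncard



section AuxPoly

variable {R : Type*} [CommRing R]

lemma degsum {d : ℕ} {φ : MvPolynomial (Fin 2) R} (hφ : φ.IsHomogeneous d)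
    {m : Fin 2 →₀ ℕ} (hm : m ∈ φ.support) : m 0 + m 1 = d := by
  have h := hφ (MvPolynomial.mem_support_iff.mp hm)
  simp only [Finsupp.weight_apply, Pi.one_apply, smul_eq_mul, mul_one] at h
  rw [← h, Finsupp.sum_fintype _ _ (fun _ => rfl), Fin.sum_univ_two]

lemma eval_smul_pow {d : ℕ} {φ : MvPolynomial (Fin 2) R} (hφ : φ.IsHomogeneous d)
    (c : R) (v : Fin 2 → R) : eval (c • v) φ = c ^ d * eval v φ := by
  rw [eval_eq', eval_eq', Finset.mul_sum]
  refine Finset.sum_congr rfl fun m hm => ?_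
  have h2 : m 0 + m 1 = d := degsum hφ hm
  rw [Fin.prod_univ_two, Fin.prod_univ_two]
  simp only [Pi.smul_apply, smul_eq_mul, mul_pow]
  rw [← h2, pow_add]
  ring

/-- Dehomogenization of a binary form with respect to the second variable. -/
noncomputable def dehom (φ : MvPolynomial (Fin 2) R) : Polynomial R :=
  ∑ m ∈ φ.support, Polynomial.C (MvPolynomial.coeff m φ) * Polynomial.X ^ (m 0)

lemma dehom_eval (φ : MvPolynomial (Fin 2) R) (x : R) :
    (dehom φ).eval x = eval ![x, 1] φ := by
  rw [dehom, eval_eq', Polynomial.eval_finset_sum]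
  refine Finset.sum_congr rfl fun m hm => ?_
  rw [Fin.prod_univ_two]
  simp

lemma dehom_natDegree_le {d : ℕ} {φ : MvPolynomial (Fin 2) R} (hφ : φ.IsHomogeneous d) :
    (dehom φ).natDegree ≤ d := by
  apply Polynomial.natDegree_sum_le_of_forall_le
  intro m hm
  have h2 : m 0 + m 1 = d := degsum hφ hm
  exact (Polynomial.natDegree_C_mul_le _ _).trans
    ((Polynomial.natDegree_X_pow_le _).trans (by omega))

lemma dehom_coeff_top {d : ℕ} {φ : MvPolynomial (Fin 2) R} (hφ : φ.IsHomogeneous d) :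
    (dehom φ).coeff d = eval ![1, 0] φ := by
  rw [dehom, Polynomial.finset_sum_coeff, eval_eq']
  refine Finset.sum_congr rfl fun m hm => ?_
  have h2 : m 0 + m 1 = d := degsum hφ hm
  rw [Polynomial.coeff_C_mul, Polynomial.coeff_X_pow, Fin.prod_univ_two]
  simp only [Matrix.cons_val_zero, Matrix.cons_val_one, Matrix.head_cons, one_pow, one_mul]
  by_cases h : m 1 = 0
  · rw [if_pos (by omega), h, pow_zero, mul_one]
  · rw [if_neg (by omega), zero_pow h, mul_zero]

lemma dehom_eq_zero {K : Type*} [Field K] [Infinite K] {d : ℕ}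
    {φ : MvPolynomial (Fin 2) K} (hφ : φ.IsHomogeneous d) (h : dehom φ = 0) : φ = 0 := by
  have hx : (X 1 : MvPolynomial (Fin 2) K) * φ = 0 := by
    apply MvPolynomial.IsHomogeneous.eq_zero_of_forall_eval_eq_zero
      ((isHomogeneous_X _ _).mul hφ)
    intro v
    rw [map_mul, eval_X]
    by_cases hv : v 1 = 0
    · rw [hv, zero_mul]
    · have hveq : (v 1 • ![v 0 / v 1, 1] : Fin 2 → K) = ![v 0, v 1] := by
        rw [Matrix.smul_cons, Matrix.smul_cons, Matrix.smul_empty, smul_eq_mul, smul_eq_mul,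
          mul_one, mul_comm, div_mul_cancel₀ _ hv]
      have hv2 : (![v 0, v 1] : Fin 2 → K) = v := by
        funext i; fin_cases i <;> rfl
      have h4 : eval v φ = (v 1) ^ d * eval ![v 0 / v 1, 1] φ := by
        conv_lhs => rw [← hv2, ← hveq]
        rw [eval_smul_pow hφ]
      rw [h4, ← dehom_eval, h]
      simp
  rcases mul_eq_zero.mp hx with h1 | h1
  · exact absurd h1 (MvPolynomial.X_ne_zero 1)
  · exact h1

lemma exists_nontrivial_zero {d : ℕ} (hd : 1 ≤ d) {φ : MvPolynomial (Fin 2) ℂ}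
    (hφ : φ.IsHomogeneous d) : ∃ v : Fin 2 → ℂ, v ≠ 0 ∧ eval v φ = 0 := by
  by_cases hF : 0 < (dehom φ).degree
  · obtain ⟨z, hz⟩ := Complex.exists_root hF
    refine ⟨![z, 1], ?_, ?_⟩
    · intro hcontra
      have := congrFun hcontra 1
      simp at this
    · rw [← dehom_eval]; exact hz
  · refine ⟨![1, 0], ?_, ?_⟩
    · intro hcontra
      have := congrFun hcontra 0
      simp at this
    · rw [← dehom_coeff_top hφ]
      apply Polynomial.coeff_eq_zero_of_natDegree_lt
      have h0 : (dehom φ).natDegree ≤ 0 :=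
        Polynomial.natDegree_le_iff_degree_le.mpr (by simpa using not_lt.mp hF)
      omega

lemma evZ_cast {K : Type*} [CommRing K] (f : ℤ →+* K) (φ : MvPolynomial (Fin 2) ℤ)
    (s t : ℤ) : f (evZ φ s t) = eval ![f s, f t] (MvPolynomial.map f φ) := by
  rw [evZ, eval_map]
  rw [show (MvPolynomial.eval ![s, t] φ) = eval₂ (RingHom.id ℤ) ![s, t] φ from rfl]
  have hfun : (f ∘ ![s, t]) = ![f s, f t] := by
    funext i; fin_cases i <;> simp
  rw [MvPolynomial.eval₂_comp_left f (RingHom.id ℤ) ![s, t] φ, hfun, RingHom.comp_id]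

end AuxPoly

section FiberKey

lemma fiber_key (d : ℕ) (hd : 1 ≤ d) (φ₀ φinf : MvPolynomial (Fin 2) ℤ)
    (h₀ : φ₀.IsHomogeneous d) (hinf : φinf.IsHomogeneous d)
    (hnc : NoCommonZero φ₀ φinf) (q : ℚ) (hq : q ∈ OmegaPhi φ₀ φinf) :
    (Fiber φ₀ φinf q).Finite ∧ (Fiber φ₀ φinf q).Nonempty ∧
      (Fiber φ₀ φinf q).ncard ≤ d := by
  obtain ⟨s₀, t₀, hg0, hne0, hq0⟩ := hq
  have hneg : ∀ (φ : MvPolynomial (Fin 2) ℤ), φ.IsHomogeneous d →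
      ∀ s t : ℤ, evZ φ (-s) (-t) = (-1) ^ d * evZ φ s t := by
    intro φ hφ s t
    have hvec : ((-1 : ℤ) • ![s, t] : Fin 2 → ℤ) = ![(-s), (-t)] := by
      rw [Matrix.smul_cons, Matrix.smul_cons, Matrix.smul_empty, smul_eq_mul, smul_eq_mul]
      norm_num
    rw [show evZ φ (-s) (-t) = eval ![(-s), (-t)] φ from rfl, ← hvec, eval_smul_pow hφ]
    rfl
  have hnonempty : (Fiber φ₀ φinf q).Nonempty := by
    by_cases hpos : 0 < s₀ ∨ (s₀ = 0 ∧ 0 < t₀)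
    · exact ⟨(s₀, t₀), hg0, hpos, hne0, hq0.symm⟩
    · have ht00 : ¬(s₀ = 0 ∧ t₀ = 0) := by
        rintro ⟨rfl, rfl⟩
        simp [Int.gcd] at hg0
      have hm1 : ((-1 : ℚ) ^ d) ≠ 0 := pow_ne_zero _ (by norm_num)
      refine ⟨(-s₀, -t₀), ?_, by omega, ?_, ?_⟩
      · show Int.gcd (-s₀) (-t₀) = 1
        rw [Int.neg_gcd, Int.gcd_neg]
        exact hg0
      · show evZ φinf (-s₀) (-t₀) ≠ 0
        rw [hneg φinf hinf]
        exact mul_ne_zero (pow_ne_zero _ (by norm_num)) hne0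
      · show (evZ φ₀ (-s₀) (-t₀) : ℚ) / (evZ φinf (-s₀) (-t₀) : ℚ) = q
        rw [hneg φ₀ h₀ s₀ t₀, hneg φinf hinf s₀ t₀]
        push_cast
        rw [mul_div_mul_left _ _ hm1]
        exact hq0.symm
  set a : ℤ := q.num with ha
  set b : ℤ := (q.den : ℤ) with hb
  have hbne : b ≠ 0 := by
    rw [hb]
    exact_mod_cast q.den_nz
  set ψ : MvPolynomial (Fin 2) ℤ := C b * φ₀ - C a * φinf with hψdef
  have hψhom : ψ.IsHomogeneous d := (h₀.C_mul b).sub (hinf.C_mul a)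
  have hψne : ψ ≠ 0 := by
    intro hzero
    obtain ⟨v, hv0, hv⟩ := exists_nontrivial_zero hd (hinf.map (Int.castRingHom ℂ))
    have hvinf : evC φinf v = 0 := hv
    have h2 : (b : ℂ) * evC φ₀ v - (a : ℂ) * evC φinf v = 0 := by
      have h3 : eval v (MvPolynomial.map (Int.castRingHom ℂ) ψ) = 0 := by
        rw [hzero, map_zero, map_zero]
      rw [hψdef] at h3
      simp only [map_sub, map_mul, MvPolynomial.map_C, eval_C] at h3
      simpa [evC] using h3
    rw [hvinf, mul_zero, sub_zero, mul_eq_zero] at h2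
    have hvz : evC φ₀ v = 0 := by
      rcases h2 with h2 | h2
      · exact absurd h2 (by exact_mod_cast hbne)
      · exact h2
    exact hv0 (hnc v hvz hvinf)
  have hfib : ∀ s t : ℤ, (s, t) ∈ Fiber φ₀ φinf q → evZ ψ s t = 0 := by
    rintro s t ⟨hg, hn, hb0, hratio⟩
    have hbQ : ((evZ φinf s t : ℤ) : ℚ) ≠ 0 := Int.cast_ne_zero.mpr hb0
    have hQ : ((evZ φ₀ s t : ℤ) : ℚ) = q * ((evZ φinf s t : ℤ) : ℚ) := by
      have h4 := hratio
      rw [div_eq_iff hbQ] at h4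
      exact h4
    have hbq : ((q.den : ℤ) : ℚ) * q = ((q.num : ℤ) : ℚ) := by
      push_cast
      exact Rat.den_mul_eq_num q
    have hZQ : ((b * evZ φ₀ s t : ℤ) : ℚ) = ((a * evZ φinf s t : ℤ) : ℚ) := by
      push_cast
      push_cast at hQ hbq
      rw [hQ, ← mul_assoc, hb, ha]
      push_cast
      rw [hbq]
    have hZ : b * evZ φ₀ s t = a * evZ φinf s t := by exact_mod_cast hZQ
    show evZ ψ s t = 0
    rw [hψdef]
    show eval ![s, t] (C b * φ₀ - C a * φinf) = 0
    simp only [map_sub, map_mul, eval_C]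
    rw [sub_eq_zero]
    exact hZ
  set ψQ : MvPolynomial (Fin 2) ℚ := MvPolynomial.map (Int.castRingHom ℚ) ψ with hψQ
  have hψQhom : ψQ.IsHomogeneous d := hψhom.map _
  have hψQne : ψQ ≠ 0 := by
    intro h
    apply hψne
    apply MvPolynomial.map_injective (Int.castRingHom ℚ) Int.cast_injective
    rw [map_zero]
    exact h
  have hcast : ∀ s t : ℤ, ((evZ ψ s t : ℤ) : ℚ) = eval ![(s : ℚ), (t : ℚ)] ψQ := by
    intro s t
    have h5 := evZ_cast (Int.castRingHom ℚ) ψ s t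
    simpa [hψQ, MvPolynomial.eval_map] using h5
  set F : Polynomial ℚ := dehom ψQ with hF
  have hFne : F ≠ 0 := fun h => hψQne (dehom_eq_zero hψQhom h)
  have hFdeg : F.natDegree ≤ d := dehom_natDegree_le hψQhom
  have hevalQ : ∀ s t : ℤ, (s, t) ∈ Fiber φ₀ φinf q →
      eval ![(s : ℚ), (t : ℚ)] ψQ = 0 := by
    intro s t hp
    rw [← hcast s t, hfib s t hp, Int.cast_zero]
  have hroot : ∀ p ∈ Fiber φ₀ φinf q, p.2 ≠ 0 →
      ((p.1 : ℚ) / (p.2 : ℚ)) ∈ F.roots.toFinset := by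
    rintro ⟨s, t⟩ hp ht
    have htQ : ((t : ℤ) : ℚ) ≠ 0 := Int.cast_ne_zero.mpr ht
    rw [Multiset.mem_toFinset, Polynomial.mem_roots']
    refine ⟨hFne, ?_⟩
    have h2 : (((t : ℤ) : ℚ) • ![((s : ℤ) : ℚ) / ((t : ℤ) : ℚ), 1] : Fin 2 → ℚ) =
        ![((s : ℤ) : ℚ), ((t : ℤ) : ℚ)] := by
      rw [Matrix.smul_cons, Matrix.smul_cons, Matrix.smul_empty, smul_eq_mul, smul_eq_mul,
        mul_one, mul_comm, div_mul_cancel₀ _ htQ]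
    have h1 := hevalQ s t hp
    rw [← h2, eval_smul_pow hψQhom] at h1
    have h3 : eval ![((s : ℤ) : ℚ) / ((t : ℤ) : ℚ), 1] ψQ = 0 := by
      rcases mul_eq_zero.mp h1 with h | h
      · exact absurd h (pow_ne_zero _ htQ)
      · exact h
    show F.IsRoot _
    rw [Polynomial.IsRoot, hF, dehom_eval]
    exact h3
  have hinj : Set.InjOn (fun p : ℤ × ℤ => (p.1 : ℚ) / (p.2 : ℚ))
      {p | p ∈ Fiber φ₀ φinf q ∧ p.2 ≠ 0} := by
    rintro ⟨s₁, t₁⟩ ⟨⟨hg₁, hn₁, -, -⟩, ht₁⟩ ⟨s₂, t₂⟩ ⟨⟨hg₂, hn₂, -, -⟩, ht₂⟩ heq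
    simp only at heq ht₁ ht₂ hn₁ hn₂ hg₁ hg₂
    have hcross : s₁ * t₂ = s₂ * t₁ := by
      have h5 := (div_eq_div_iff (Int.cast_ne_zero.mpr ht₁) (Int.cast_ne_zero.mpr ht₂)).mp heq
      exact_mod_cast h5
    have d1 : s₁ ∣ s₂ := Int.dvd_of_dvd_mul_right_of_gcd_one
      (⟨t₂, by linear_combination -hcross⟩ : s₁ ∣ t₁ * s₂) hg₁
    have d2 : s₂ ∣ s₁ := Int.dvd_of_dvd_mul_right_of_gcd_one
      (⟨t₁, by linear_combination hcross⟩ : s₂ ∣ t₂ * s₁) hg₂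
    have e1 : t₁ ∣ t₂ := Int.dvd_of_dvd_mul_right_of_gcd_one
      (⟨s₂, by linear_combination hcross⟩ : t₁ ∣ s₁ * t₂) (by rw [Int.gcd_comm]; exact hg₁)
    have e2 : t₂ ∣ t₁ := Int.dvd_of_dvd_mul_right_of_gcd_one
      (⟨s₁, by linear_combination -hcross⟩ : t₂ ∣ s₂ * t₁) (by rw [Int.gcd_comm]; exact hg₂)
    have hs : s₁.natAbs = s₂.natAbs :=
      Nat.dvd_antisymm (Int.natAbs_dvd_natAbs.mpr d1) (Int.natAbs_dvd_natAbs.mpr d2)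
    have ht : t₁.natAbs = t₂.natAbs :=
      Nat.dvd_antisymm (Int.natAbs_dvd_natAbs.mpr e1) (Int.natAbs_dvd_natAbs.mpr e2)
    have hss : s₁ = s₂ := by omega
    have htt : t₁ = t₂ := by
      by_cases h0 : s₁ = 0
      · omega
      · rw [hss] at hcross h0
        have h6 : s₂ * t₂ = s₂ * t₁ := by linear_combination hcross
        exact (mul_left_cancel₀ h0 h6).symm
    simp only [Prod.mk.injEq]
    exact ⟨hss, htt⟩
  set A : Set (ℤ × ℤ) := {p | p ∈ Fiber φ₀ φinf q ∧ p.2 ≠ 0} with hA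
  set B : Set (ℤ × ℤ) := {p | p ∈ Fiber φ₀ φinf q ∧ p.2 = 0} with hB
  have hcup : Fiber φ₀ φinf q = A ∪ B := by
    ext p
    simp only [hA, hB, Set.mem_union, Set.mem_setOf_eq]
    tauto
  have hBsub : B ⊆ {((1 : ℤ), (0 : ℤ))} := by
    rintro ⟨s, t⟩ ⟨⟨hg, hn, -, -⟩, ht⟩
    simp only at ht hn hg
    subst ht
    have h7 : s.natAbs = 1 := by simpa using hg
    have h8 : s = 1 := by omega
    rw [Set.mem_singleton_iff, h8]
  have himg : (fun p : ℤ × ℤ => (p.1 : ℚ) / (p.2 : ℚ)) '' A ⊆ ↑F.roots.toFinset := by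
    rintro x ⟨p, hp, rfl⟩
    exact hroot p hp.1 hp.2
  have hAfin : A.Finite :=
    Set.Finite.of_finite_image ((F.roots.toFinset.finite_toSet).subset himg) hinj
  have hBfin : B.Finite := (Set.finite_singleton _).subset hBsub
  have hfin : (Fiber φ₀ φinf q).Finite := by rw [hcup]; exact hAfin.union hBfin
  have hAcard : A.ncard ≤ F.natDegree := by
    calc A.ncard = ((fun p : ℤ × ℤ => (p.1 : ℚ) / (p.2 : ℚ)) '' A).ncard :=
          (Set.ncard_image_of_injOn hinj).symm
      _ ≤ (↑F.roots.toFinset : Set ℚ).ncard :=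
          Set.ncard_le_ncard himg (F.roots.toFinset.finite_toSet)
      _ = F.roots.toFinset.card := Set.ncard_coe_finset _
      _ ≤ Multiset.card F.roots := Multiset.toFinset_card_le _
      _ ≤ F.natDegree := Polynomial.card_roots' F
  have hdisj : Disjoint A B := by
    rw [Set.disjoint_left]
    rintro p ⟨-, h1⟩ ⟨-, h2⟩
    exact h1 h2
  have hcards : (Fiber φ₀ φinf q).ncard = A.ncard + B.ncard := by
    rw [hcup, Set.ncard_union_eq hdisj hAfin hBfin]
  refine ⟨hfin, hnonempty, ?_⟩
  by_cases hc : MvPolynomial.eval ![(1 : ℚ), (0 : ℚ)] ψQ = 0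
  · have hFd : F.natDegree < d := by
      rcases lt_or_eq_of_le hFdeg with h | h
      · exact h
      · exfalso
        apply hFne
        rw [← Polynomial.leadingCoeff_eq_zero, Polynomial.leadingCoeff, h, hF,
          dehom_coeff_top hψQhom]
        exact hc
    have hBcard : B.ncard ≤ 1 := by
      calc B.ncard ≤ ({((1 : ℤ), (0 : ℤ))} : Set (ℤ × ℤ)).ncard :=
            Set.ncard_le_ncard hBsub (Set.finite_singleton _)
        _ = 1 := Set.ncard_singleton _
    omega
  · have hBe : B = ∅ := by
      rw [Set.eq_empty_iff_forall_notMem]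
      intro p hp
      have h9 := hBsub hp
      rw [Set.mem_singleton_iff] at h9
      apply hc
      have hp1 : ((1 : ℤ), (0 : ℤ)) ∈ Fiber φ₀ φinf q := by rw [← h9]; exact hp.1
      have h10 : evZ ψ 1 0 = 0 := hfib 1 0 hp1
      have h11 := hcast 1 0
      rw [h10, Int.cast_zero] at h11
      simpa using h11.symm
    have hBcard : B.ncard = 0 := by rw [hBe]; exact Set.ncard_empty _
    omega

end FiberKey

theorem stmt12 (d : ℕ) (hd : 1 ≤ d) (φ₀ φinf : MvPolynomial (Fin 2) ℤ)
    (h₀ : φ₀.IsHomogeneous d) (hinf : φinf.IsHomogeneous d)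
    (hnc : NoCommonZero φ₀ φinf) :
    (∀ q ∈ OmegaPhi φ₀ φinf,
      1 ≤ (Fiber φ₀ φinf q).ncard ∧ (Fiber φ₀ φinf q).ncard ≤ d) ∧
    (∀ h : ℝ, 0 < h →
      (NPhi φ₀ φinf h : ℝ) / d ≤ (NCount (OmegaPhi φ₀ φinf) h : ℝ) ∧
      (NCount (OmegaPhi φ₀ φinf) h : ℝ) ≤ (NPhi φ₀ φinf h : ℝ)) := by
  have key : ∀ q ∈ OmegaPhi φ₀ φinf, (Fiber φ₀ φinf q).Finite ∧
      (Fiber φ₀ φinf q).Nonempty ∧ (Fiber φ₀ φinf q).ncard ≤ d :=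
    fun q hq => fiber_key d hd φ₀ φinf h₀ hinf hnc q hq
  constructor
  · intro q hq
    obtain ⟨hfin, hne, hle⟩ := key q hq
    exact ⟨(Set.ncard_pos hfin).mpr hne, hle⟩
  · intro h hh
    set S : Set ℚ := {q ∈ OmegaPhi φ₀ φinf | (Ht q : ℝ) ≤ h} with hS
    set T : Set (ℤ × ℤ) := {p : ℤ × ℤ | Int.gcd p.1 p.2 = 1 ∧
      (0 < p.1 ∨ (p.1 = 0 ∧ 0 < p.2)) ∧ evZ φinf p.1 p.2 ≠ 0 ∧
      (Ht ((evZ φ₀ p.1 p.2 : ℚ) / (evZ φinf p.1 p.2 : ℚ)) : ℝ) ≤ h} with hT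
    have hNC : NCount (OmegaPhi φ₀ φinf) h = S.ncard := rfl
    have hNP : NPhi φ₀ φinf h = T.ncard := rfl
    have hS0fin : {q : ℚ | (Ht q : ℝ) ≤ h}.Finite := by
      set H : ℕ := ⌊h⌋₊ with hH
      have hsub : (fun q : ℚ => (q.num, (q.den : ℤ))) '' {q : ℚ | (Ht q : ℝ) ≤ h} ⊆
          (Set.Icc (-(H : ℤ)) (H : ℤ)) ×ˢ (Set.Icc (0 : ℤ) (H : ℤ)) := by
        rintro _ ⟨q, hq, rfl⟩
        have hHle : Ht q ≤ H := Nat.le_floor hq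
        have h1 : q.num.natAbs ≤ H := le_trans (le_max_left _ _) hHle
        have h2 : q.den ≤ H := le_trans (le_max_right _ _) hHle
        simp only [Set.mem_prod, Set.mem_Icc]
        omega
      have hi : Set.InjOn (fun q : ℚ => (q.num, (q.den : ℤ))) {q : ℚ | (Ht q : ℝ) ≤ h} := by
        intro x _ y _ hxy
        simp only [Prod.mk.injEq] at hxy
        exact Rat.ext hxy.1 (by exact_mod_cast hxy.2)
      exact Set.Finite.of_finite_image
        (Set.Finite.subset ((Set.finite_Icc _ _).prod (Set.finite_Icc _ _)) hsub) hi
    have hSfin : S.Finite := hS0fin.subset fun q hq => hq.2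
    have hTsub : T ⊆ ⋃ q ∈ S, Fiber φ₀ φinf q := by
      rintro ⟨s, t⟩ ⟨hg, hn, hb, hht⟩
      have hmem : ((evZ φ₀ s t : ℚ) / (evZ φinf s t : ℚ)) ∈ S :=
        ⟨⟨s, t, hg, hb, rfl⟩, hht⟩
      exact Set.mem_biUnion hmem ⟨hg, hn, hb, rfl⟩
    have hTfin : T.Finite :=
      Set.Finite.subset (Set.Finite.biUnion hSfin fun q hq => (key q hq.1).1) hTsub
    have hmul : T.ncard ≤ d * S.ncard := by
      classical
      rw [Set.ncard_eq_toFinset_card _ hTfin, Set.ncard_eq_toFinset_card _ hSfin]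
      set f : ℤ × ℤ → ℚ := fun p => (evZ φ₀ p.1 p.2 : ℚ) / (evZ φinf p.1 p.2 : ℚ) with hf
      have hfilter : ∀ x ∈ hTfin.toFinset.image f,
          (hTfin.toFinset.filter fun p => f p = x).card ≤ d := by
        intro x hx
        obtain ⟨p0, hp0, rfl⟩ := Finset.mem_image.mp hx
        rw [Set.Finite.mem_toFinset] at hp0
        have hx' : f p0 ∈ OmegaPhi φ₀ φinf := ⟨p0.1, p0.2, hp0.1, hp0.2.2.1, rfl⟩
        obtain ⟨hfin', -, hle'⟩ := key (f p0) hx'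
        calc (hTfin.toFinset.filter fun p => f p = f p0).card
            = ((hTfin.toFinset.filter fun p => f p = f p0 : Finset (ℤ × ℤ)) :
                Set (ℤ × ℤ)).ncard := (Set.ncard_coe_finset _).symm
          _ ≤ (Fiber φ₀ φinf (f p0)).ncard := by
              apply Set.ncard_le_ncard ?_ hfin'
              intro p hp
              rw [Finset.coe_filter, Set.mem_setOf_eq, Set.Finite.mem_toFinset] at hp
              exact ⟨hp.1.1, hp.1.2.1, hp.1.2.2.1, hp.2⟩
          _ ≤ d := hle'
      have himgsub : hTfin.toFinset.image f ⊆ hSfin.toFinset := by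
        intro x hx
        obtain ⟨p, hp, rfl⟩ := Finset.mem_image.mp hx
        rw [Set.Finite.mem_toFinset] at hp
        rw [Set.Finite.mem_toFinset]
        exact ⟨⟨p.1, p.2, hp.1, hp.2.2.1, rfl⟩, hp.2.2.2⟩
      calc hTfin.toFinset.card ≤ d * (hTfin.toFinset.image f).card :=
            Finset.card_le_mul_card_image _ d hfilter
        _ ≤ d * hSfin.toFinset.card := Nat.mul_le_mul_left d (Finset.card_le_card himgsub)
    have hcard2 : S.ncard ≤ T.ncard := by
      have hch : ∀ q ∈ S, ∃ p : ℤ × ℤ, p ∈ Fiber φ₀ φinf q := fun q hq => (key q hq.1).2.1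
      choose! g hg using hch
      have hginj : Set.InjOn g S := by
        intro x hx y hy hxy
        obtain ⟨-, -, -, h1⟩ := hg x hx
        obtain ⟨-, -, -, h2⟩ := hg y hy
        rw [← h1, ← h2, hxy]
      have hgsub : g '' S ⊆ T := by
        rintro _ ⟨q, hq, rfl⟩
        obtain ⟨k1, k2, k3, k4⟩ := hg q hq
        exact ⟨k1, k2, k3, by rw [k4]; exact hq.2⟩
      calc S.ncard = (g '' S).ncard := (Set.ncard_image_of_injOn hginj).symm
        _ ≤ T.ncard := Set.ncard_le_ncard hgsub hTfin
    have hdpos : (0 : ℝ) < d := by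
      have : 0 < d := by omega
      exact_mod_cast this
    constructor
    · rw [hNC, hNP, div_le_iff₀ hdpos]
      calc (T.ncard : ℝ) ≤ ((d * S.ncard : ℕ) : ℝ) := by exact_mod_cast hmul
        _ = (S.ncard : ℝ) * d := by push_cast; ring
    · rw [hNC, hNP]
      exact_mod_cast hcard2
end
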